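/- Nested superlevel sets shrink to the limit set: let u : X → ℝ be continuous on a compact metric space X, let Δ_ε (ε ≥ 0) be an upper semi-continuous, compact-valued, monotone (ε ≤ ε' ⟹ Δ_ε ⊆ Δ_{ε'}) family of nonempty subsets of X, and define C_ε := {x ∈ X : u(x) ≥ min_{y ∈ Δ_ε} u(y)}. Then for every ξ > 0 there exists q ∈ ℤ⁺ such that C_{1/q} is contained in the ξ-neighborhood S_ξ := {x ∈ X : dist(x, C_0) < ξ} of C_0. -/
import Mathlib


/-- nested superlevel sets shrink to the limit set: with an upper
semi-continuous, compact-valued, monotone family `ε ↦ Δ ε` of nonempty sets and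
`C ε := {x : u x ≥ min_{Δ ε} u}`, for every `ξ > 0` there is `q ∈ ℤ⁺` with
`C (1/q) ⊆ {x : dist(x, C 0) < ξ}`. -/
theorem nested_superlevel_shrink
    {X : Type*} [MetricSpace X] [CompactSpace X]
    (u : X → ℝ) (hu : Continuous u)
    (Δ : ℝ → Set X)
    (hne : ∀ ε : ℝ, 0 ≤ ε → (Δ ε).Nonempty)
    (hcomp : ∀ ε : ℝ, 0 ≤ ε → IsCompact (Δ ε))
    (hmono : ∀ ε ε' : ℝ, 0 ≤ ε → ε ≤ ε' → Δ ε ⊆ Δ ε')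
    (husc : IsClosed {p : ℝ × X | 0 ≤ p.1 ∧ p.2 ∈ Δ p.1})
    (C : ℝ → Set X)
    (hC : ∀ ε : ℝ, C ε = {x : X | sInf (u '' Δ ε) ≤ u x}) :
    ∀ ξ : ℝ, 0 < ξ → ∃ q : ℕ, 0 < q ∧
      C (1 / (q : ℝ)) ⊆ {x : X | Metric.infDist x (C 0) < ξ} := by
  intro ξ hξ
  by_contra hcon
  push_neg at hcon
  -- for each n, pick a bad point x n ∈ C (1/(n+1)) with ξ ≤ infDist
  have hpos : ∀ n : ℕ, (0 : ℝ) ≤ 1 / ((n : ℝ) + 1) := by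
    intro n; positivity
  have hbad : ∀ n : ℕ, ∃ x : X, x ∈ C (1 / ((n : ℝ) + 1)) ∧
      ξ ≤ Metric.infDist x (C 0) := by
    intro n
    obtain ⟨x, hx1, hx2⟩ := Set.not_subset.mp (hcon (n + 1) (Nat.succ_pos n))
    refine ⟨x, ?_, not_lt.mp hx2⟩
    convert hx1 using 3
    push_cast
    ring
  choose x hxC hxd using hbad
  -- for each n, pick a minimizer y n of u on Δ (1/(n+1))
  have hmin : ∀ n : ℕ, ∃ y : X, y ∈ Δ (1 / ((n : ℝ) + 1)) ∧
      sInf (u '' Δ (1 / ((n : ℝ) + 1))) = u y := by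
    intro n
    obtain ⟨y, hy, hySInf⟩ := (hcomp _ (hpos n)).exists_sInf_image_eq
      (hne _ (hpos n)) hu.continuousOn
    exact ⟨y, hy, hySInf⟩
  choose y hyΔ hyInf using hmin
  -- extract convergent subsequences
  obtain ⟨a, -, φ, hφ, hxa⟩ := IsCompact.tendsto_subseq (x := x) isCompact_univ
    (fun n => Set.mem_univ _)
  obtain ⟨b, -, ψ, hψ, hyb⟩ := IsCompact.tendsto_subseq (x := y ∘ φ) isCompact_univ
    (fun n => Set.mem_univ _)
  set σ : ℕ → ℕ := φ ∘ ψ with hσ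
  have hσmono : StrictMono σ := hφ.comp hψ
  have hxa' : Filter.Tendsto (fun n => x (σ n)) Filter.atTop (nhds a) :=
    hxa.comp hψ.tendsto_atTop
  have hyb' : Filter.Tendsto (fun n => y (σ n)) Filter.atTop (nhds b) := hyb
  -- the parameters tend to 0
  have hεto0 : Filter.Tendsto (fun n : ℕ => 1 / ((σ n : ℝ) + 1)) Filter.atTop (nhds 0) := by
    have h1 : Filter.Tendsto (fun n : ℕ => 1 / ((n : ℝ) + 1)) Filter.atTop (nhds 0) :=
      tendsto_one_div_add_atTop_nhds_zero_nat
    exact h1.comp hσmono.tendsto_atTop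
  -- b ∈ Δ 0 by closedness of the graph
  have hbΔ : b ∈ Δ 0 := by
    have hmem : ∀ n : ℕ, ((1 / ((σ n : ℝ) + 1), y (σ n)) : ℝ × X) ∈
        {p : ℝ × X | 0 ≤ p.1 ∧ p.2 ∈ Δ p.1} := fun n => ⟨hpos _, hyΔ _⟩
    have htend : Filter.Tendsto (fun n : ℕ => ((1 / ((σ n : ℝ) + 1), y (σ n)) : ℝ × X))
        Filter.atTop (nhds (0, b)) := hεto0.prodMk_nhds hyb'
    have := husc.mem_of_tendsto htend (Filter.Eventually.of_forall hmem)
    exact this.2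
  -- u b ≥ sInf (u '' Δ 0)
  have hbdd : BddBelow (u '' Δ 0) := ((hcomp 0 le_rfl).image hu).bddBelow
  have hub : sInf (u '' Δ 0) ≤ u b := csInf_le hbdd ⟨b, hbΔ, rfl⟩
  -- u a ≥ u b by taking limits in u (x (σ n)) ≥ u (y (σ n))
  have hge : ∀ n : ℕ, u (y (σ n)) ≤ u (x (σ n)) := by
    intro n
    have h := hxC (σ n)
    rw [hC, Set.mem_setOf_eq, hyInf (σ n)] at h
    exact h
  have hua : Filter.Tendsto (fun n => u (x (σ n))) Filter.atTop (nhds (u a)) :=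
    (hu.tendsto a).comp hxa'
  have hub' : Filter.Tendsto (fun n => u (y (σ n))) Filter.atTop (nhds (u b)) :=
    (hu.tendsto b).comp hyb'
  have huba : u b ≤ u a := le_of_tendsto_of_tendsto' hub' hua hge
  -- hence a ∈ C 0
  have haC : a ∈ C 0 := by
    rw [hC]
    exact le_trans hub huba
  -- but infDist a (C 0) ≥ ξ by continuity, contradiction
  have hdist : Filter.Tendsto (fun n => Metric.infDist (x (σ n)) (C 0))
      Filter.atTop (nhds (Metric.infDist a (C 0))) :=
    ((Metric.continuous_infDist_pt (C 0)).tendsto a).comp hxa'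
  have hξle : ξ ≤ Metric.infDist a (C 0) :=
    ge_of_tendsto hdist (Filter.Eventually.of_forall fun n => hxd (σ n))
  have : Metric.infDist a (C 0) = 0 := Metric.infDist_zero_of_mem haC
  linarith
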